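/- The efficient influence function for Ψ has mean zero: with all nuisance functions evaluated at the truth, E[ (Y − E[Y|A,Z,C])·f(Z|a*,C)/f(Z|A,C) + (I(A=a*)/f(a*|C))·(Σ_a E[Y|a,Z,C]f(a|C) − Σ_{a,z̄} E[Y|a,z̄,C] f(z̄|A,C) f(a|C)) + Σ_z E[Y|A,z,C] f(z|a*,C) − Ψ ] = 0. -/
import Mathlib


open Finset
open scoped Classical BigOperators

noncomputable section

namespace FrontDoor

/-- Probability of an event under pmf `p` on a finite sample space. -/
def pr {Ω : Type*} [Fintype Ω] (p : Ω → ℝ) (E : Ω → Prop) : ℝ :=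
  ∑ ω, if E ω then p ω else 0

/-- Expectation of `X` under pmf `p`. -/
def ex {Ω : Type*} [Fintype Ω] (p : Ω → ℝ) (X : Ω → ℝ) : ℝ :=
  ∑ ω, p ω * X ω

/-- Conditional expectation `E[X | E]`. -/
def cex {Ω : Type*} [Fintype Ω] (p : Ω → ℝ) (X : Ω → ℝ) (E : Ω → Prop) : ℝ :=
  (∑ ω, if E ω then p ω * X ω else 0) / pr p E

/-- Conditional probability `Pr(E | F)`. -/
def cpr {Ω : Type*} [Fintype Ω] (p : Ω → ℝ) (E F : Ω → Prop) : ℝ :=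
  pr p (fun ω => E ω ∧ F ω) / pr p F

end FrontDoor

open FrontDoor

section EifHelpers

set_option linter.unusedSectionVars false

variable {Ω α ζ γ : Type*} [Fintype Ω] [Fintype α] [Fintype ζ] [Fintype γ]
variable (p : Ω → ℝ) (A : Ω → α) (Z : Ω → ζ) (Y : Ω → ℝ) (C : Ω → γ)

lemma pr_congr' {E F : Ω → Prop} (h : ∀ ω, E ω ↔ F ω) : pr p E = pr p F := by
  unfold pr; exact Finset.sum_congr rfl fun ω _ => by rw [eq_iff_iff.2 (h ω)]

lemma pr_mono' (hp0 : ∀ ω, 0 ≤ p ω) {E F : Ω → Prop} (h : ∀ ω, E ω → F ω) :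
    pr p E ≤ pr p F := by
  unfold pr
  refine Finset.sum_le_sum fun ω _ => ?_
  by_cases hE : E ω
  · simp [hE, h ω hE]
  · simp only [hE, if_false]
    by_cases hF : F ω <;> simp [hF, hp0 ω]

lemma fiber_decomp (F : Ω → ℝ) :
    ∑ ω, F ω = ∑ c, ∑ a, ∑ z, ∑ ω, if A ω = a ∧ Z ω = z ∧ C ω = c then F ω else 0 := by
  have key : ∀ ω : Ω, (∑ c, ∑ a, ∑ z, if A ω = a ∧ Z ω = z ∧ C ω = c then F ω else 0) = F ω := by
    intro ω; simp [ite_and, Finset.sum_ite_eq, Finset.sum_ite_eq']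
  calc ∑ ω, F ω = ∑ ω, ∑ c, ∑ a, ∑ z, if A ω = a ∧ Z ω = z ∧ C ω = c then F ω else 0 := by
        simp [key]
    _ = _ := by
        rw [Finset.sum_comm]
        refine Finset.sum_congr rfl fun c _ => ?_
        rw [Finset.sum_comm]
        refine Finset.sum_congr rfl fun a _ => ?_
        rw [Finset.sum_comm]

lemma sum_pr_z (a : α) (c : γ) :
    ∑ z, pr p (fun ω => A ω = a ∧ Z ω = z ∧ C ω = c) = pr p (fun ω => A ω = a ∧ C ω = c) := by
  unfold pr
  rw [Finset.sum_comm]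
  refine Finset.sum_congr rfl fun ω _ => ?_
  by_cases h : A ω = a ∧ C ω = c
  · simp [ite_and, h.1, h.2, Finset.sum_ite_eq, Finset.sum_ite_eq']
  · rw [if_neg h]
    refine Finset.sum_eq_zero fun z _ => ?_
    rw [if_neg]; tauto

lemma sum_pr_a (c : γ) :
    ∑ a, pr p (fun ω => A ω = a ∧ C ω = c) = pr p (fun ω => C ω = c) := by
  unfold pr
  rw [Finset.sum_comm]
  refine Finset.sum_congr rfl fun ω _ => ?_
  by_cases h : C ω = c
  · simp [ite_and, h, Finset.sum_ite_eq, Finset.sum_ite_eq']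
  · rw [if_neg h]
    refine Finset.sum_eq_zero fun a _ => ?_
    rw [if_neg]; tauto

lemma cpr_z (z : ζ) (a : α) (c : γ) :
    cpr p (fun ω => Z ω = z) (fun ω => A ω = a ∧ C ω = c)
      = pr p (fun ω => A ω = a ∧ Z ω = z ∧ C ω = c) / pr p (fun ω => A ω = a ∧ C ω = c) := by
  unfold cpr
  congr 1
  exact pr_congr' p fun ω => by tauto

lemma cpr_a (a : α) (c : γ) :
    cpr p (fun ω => A ω = a) (fun ω => C ω = c)
      = pr p (fun ω => A ω = a ∧ C ω = c) / pr p (fun ω => C ω = c) := rfl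

lemma fiber_pull (a : α) (z : ζ) (c : γ) (k : ℝ) :
    (∑ ω, if A ω = a ∧ Z ω = z ∧ C ω = c then p ω * k else 0)
      = pr p (fun ω => A ω = a ∧ Z ω = z ∧ C ω = c) * k := by
  unfold pr
  rw [Finset.sum_mul]
  refine Finset.sum_congr rfl fun ω _ => ?_
  split <;> simp

lemma sum_ite_p_eq_pr (a : α) (z : ζ) (c : γ) :
    (∑ ω, if A ω = a ∧ Z ω = z ∧ C ω = c then p ω else 0)
      = pr p (fun ω => A ω = a ∧ Z ω = z ∧ C ω = c) :=
  Finset.sum_congr rfl fun ω _ => by congr 1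

lemma fiber_Y (a : α) (z : ζ) (c : γ)
    (hq : pr p (fun ω => A ω = a ∧ Z ω = z ∧ C ω = c) ≠ 0) :
    (∑ ω, if A ω = a ∧ Z ω = z ∧ C ω = c then p ω * Y ω else 0)
      = cex p Y (fun ω' => A ω' = a ∧ Z ω' = z ∧ C ω' = c)
          * pr p (fun ω => A ω = a ∧ Z ω = z ∧ C ω = c) := by
  unfold cex
  rw [div_mul_cancel₀ _ hq]
  exact Finset.sum_congr rfl fun ω _ => by congr 1

end EifHelpers

/-- The efficient influence function for `Ψ` has mean zero when all
nuisance functions are evaluated at the truth. -/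
theorem eif_mean_zero
    {Ω α ζ γ : Type*} [Fintype Ω] [Fintype α] [Fintype ζ] [Fintype γ]
    (p : Ω → ℝ) (hp0 : ∀ ω, 0 ≤ p ω) (hp1 : ∑ ω, p ω = 1)
    (A : Ω → α) (Z : Ω → ζ) (Y : Ω → ℝ) (C : Ω → γ) (astar : α)
    (hposAC : ∀ (a : α) (c : γ), 0 < pr p (fun ω => A ω = a ∧ C ω = c))
    (hposZAC : ∀ (a : α) (z : ζ) (c : γ),
      0 < pr p (fun ω => A ω = a ∧ Z ω = z ∧ C ω = c)) :
    ex p (fun ω =>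
        (Y ω - cex p Y (fun ω' => A ω' = A ω ∧ Z ω' = Z ω ∧ C ω' = C ω))
            * cpr p (fun ω' => Z ω' = Z ω) (fun ω' => A ω' = astar ∧ C ω' = C ω)
            / cpr p (fun ω' => Z ω' = Z ω) (fun ω' => A ω' = A ω ∧ C ω' = C ω)
        + (if A ω = astar then (1 : ℝ) else 0)
            / cpr p (fun ω' => A ω' = astar) (fun ω' => C ω' = C ω)
            * ((∑ a : α,
                  cex p Y (fun ω' => A ω' = a ∧ Z ω' = Z ω ∧ C ω' = C ω)
                    * cpr p (fun ω' => A ω' = a) (fun ω' => C ω' = C ω))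
               - ∑ a : α, ∑ zb : ζ,
                   cex p Y (fun ω' => A ω' = a ∧ Z ω' = zb ∧ C ω' = C ω)
                     * cpr p (fun ω' => Z ω' = zb) (fun ω' => A ω' = A ω ∧ C ω' = C ω)
                     * cpr p (fun ω' => A ω' = a) (fun ω' => C ω' = C ω))
        + (∑ z : ζ,
            cex p Y (fun ω' => A ω' = A ω ∧ Z ω' = z ∧ C ω' = C ω)
              * cpr p (fun ω' => Z ω' = z) (fun ω' => A ω' = astar ∧ C ω' = C ω))
        - ∑ z : ζ, ∑ c : γ,
            cpr p (fun ω' => Z ω' = z) (fun ω' => A ω' = astar ∧ C ω' = c)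
              * ∑ a : α,
                  cex p Y (fun ω' => A ω' = a ∧ Z ω' = z ∧ C ω' = c)
                    * cpr p (fun ω' => A ω' = a) (fun ω' => C ω' = c)
                    * pr p (fun ω' => C ω' = c))
      = 0 := by
  have hΩ : Nonempty Ω := by
    by_contra h
    rw [not_nonempty_iff] at h
    rw [Finset.univ_eq_empty, Finset.sum_empty] at hp1
    exact one_ne_zero hp1.symm
  obtain ⟨ω0⟩ := hΩ
  have hqc : ∀ c : γ, 0 < pr p (fun ω => C ω = c) := fun c =>
    lt_of_lt_of_le (hposAC (A ω0) c) (pr_mono' p hp0 fun ω h => h.2)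
  -- Term 1
  have H1 : (∑ ω, p ω *
      ((Y ω - cex p Y (fun ω' => A ω' = A ω ∧ Z ω' = Z ω ∧ C ω' = C ω))
          * cpr p (fun ω' => Z ω' = Z ω) (fun ω' => A ω' = astar ∧ C ω' = C ω)
          / cpr p (fun ω' => Z ω' = Z ω) (fun ω' => A ω' = A ω ∧ C ω' = C ω))) = 0 := by
    rw [fiber_decomp A Z C]
    refine Finset.sum_eq_zero fun c _ => Finset.sum_eq_zero fun a _ =>
      Finset.sum_eq_zero fun z _ => ?_
    have e : ∀ ω : Ω, (if A ω = a ∧ Z ω = z ∧ C ω = c then p ω *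
        ((Y ω - cex p Y (fun ω' => A ω' = A ω ∧ Z ω' = Z ω ∧ C ω' = C ω))
          * cpr p (fun ω' => Z ω' = Z ω) (fun ω' => A ω' = astar ∧ C ω' = C ω)
          / cpr p (fun ω' => Z ω' = Z ω) (fun ω' => A ω' = A ω ∧ C ω' = C ω)) else 0)
        = (if A ω = a ∧ Z ω = z ∧ C ω = c then p ω * Y ω else 0)
            * (cpr p (fun ω' => Z ω' = z) (fun ω' => A ω' = astar ∧ C ω' = c)
               / cpr p (fun ω' => Z ω' = z) (fun ω' => A ω' = a ∧ C ω' = c))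
          - (if A ω = a ∧ Z ω = z ∧ C ω = c then p ω else 0)
            * (cex p Y (fun ω' => A ω' = a ∧ Z ω' = z ∧ C ω' = c)
               * (cpr p (fun ω' => Z ω' = z) (fun ω' => A ω' = astar ∧ C ω' = c)
                  / cpr p (fun ω' => Z ω' = z) (fun ω' => A ω' = a ∧ C ω' = c))) := by
      intro ω
      by_cases h : A ω = a ∧ Z ω = z ∧ C ω = c
      · rw [if_pos h, if_pos h, if_pos h]
        obtain ⟨h1, h2, h3⟩ := h
        rw [h1, h2, h3]
        ring
      · rw [if_neg h, if_neg h, if_neg h]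
        ring
    rw [Finset.sum_congr rfl fun ω _ => e ω, Finset.sum_sub_distrib,
      ← Finset.sum_mul, ← Finset.sum_mul,
      fiber_Y p A Z Y C a z c (hposZAC a z c).ne', sum_ite_p_eq_pr p A Z C a z c]
    ring
  -- Term 2
  have H2 : (∑ ω, p ω *
      ((if A ω = astar then (1 : ℝ) else 0)
          / cpr p (fun ω' => A ω' = astar) (fun ω' => C ω' = C ω)
          * ((∑ a : α,
                cex p Y (fun ω' => A ω' = a ∧ Z ω' = Z ω ∧ C ω' = C ω)
                  * cpr p (fun ω' => A ω' = a) (fun ω' => C ω' = C ω))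
             - ∑ a : α, ∑ zb : ζ,
                 cex p Y (fun ω' => A ω' = a ∧ Z ω' = zb ∧ C ω' = C ω)
                   * cpr p (fun ω' => Z ω' = zb) (fun ω' => A ω' = A ω ∧ C ω' = C ω)
                   * cpr p (fun ω' => A ω' = a) (fun ω' => C ω' = C ω)))) = 0 := by
    rw [fiber_decomp A Z C]
    refine Finset.sum_eq_zero fun c _ => ?_
    have step : ∀ (a : α) (z : ζ), (∑ ω, if A ω = a ∧ Z ω = z ∧ C ω = c then p ω *
        ((if A ω = astar then (1 : ℝ) else 0)
          / cpr p (fun ω' => A ω' = astar) (fun ω' => C ω' = C ω)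
          * ((∑ a : α,
                cex p Y (fun ω' => A ω' = a ∧ Z ω' = Z ω ∧ C ω' = C ω)
                  * cpr p (fun ω' => A ω' = a) (fun ω' => C ω' = C ω))
             - ∑ a : α, ∑ zb : ζ,
                 cex p Y (fun ω' => A ω' = a ∧ Z ω' = zb ∧ C ω' = C ω)
                   * cpr p (fun ω' => Z ω' = zb) (fun ω' => A ω' = A ω ∧ C ω' = C ω)
                   * cpr p (fun ω' => A ω' = a) (fun ω' => C ω' = C ω))) else 0)
        = pr p (fun ω => A ω = a ∧ Z ω = z ∧ C ω = c) *
          ((if a = astar then (1 : ℝ) else 0)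
            / cpr p (fun ω' => A ω' = astar) (fun ω' => C ω' = c)
            * ((∑ a' : α,
                  cex p Y (fun ω' => A ω' = a' ∧ Z ω' = z ∧ C ω' = c)
                    * cpr p (fun ω' => A ω' = a') (fun ω' => C ω' = c))
               - ∑ a' : α, ∑ zb : ζ,
                   cex p Y (fun ω' => A ω' = a' ∧ Z ω' = zb ∧ C ω' = c)
                     * cpr p (fun ω' => Z ω' = zb) (fun ω' => A ω' = a ∧ C ω' = c)
                     * cpr p (fun ω' => A ω' = a') (fun ω' => C ω' = c))) := by
      intro a z
      rw [← fiber_pull p A Z C a z c]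
      refine Finset.sum_congr rfl fun ω _ => ?_
      by_cases h : A ω = a ∧ Z ω = z ∧ C ω = c
      · rw [if_pos h, if_pos h]
        obtain ⟨h1, h2, h3⟩ := h
        rw [h1, h2, h3]
      · rw [if_neg h, if_neg h]
    rw [Finset.sum_congr rfl fun a _ => Finset.sum_congr rfl fun z _ => step a z]
    rw [Finset.sum_eq_single astar
      (fun a _ ha => Finset.sum_eq_zero fun z _ => by simp [ha]) (by simp)]
    simp only [eq_self_iff_true, if_true]
    have key : (∑ z, pr p (fun ω => A ω = astar ∧ Z ω = z ∧ C ω = c) *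
          (∑ a' : α, cex p Y (fun ω' => A ω' = a' ∧ Z ω' = z ∧ C ω' = c)
            * cpr p (fun ω' => A ω' = a') (fun ω' => C ω' = c)))
        = pr p (fun ω => A ω = astar ∧ C ω = c) *
          (∑ a' : α, ∑ zb : ζ, cex p Y (fun ω' => A ω' = a' ∧ Z ω' = zb ∧ C ω' = c)
            * cpr p (fun ω' => Z ω' = zb) (fun ω' => A ω' = astar ∧ C ω' = c)
            * cpr p (fun ω' => A ω' = a') (fun ω' => C ω' = c)) := by
      simp only [Finset.mul_sum]
      rw [Finset.sum_comm]
      refine Finset.sum_congr rfl fun a' _ => Finset.sum_congr rfl fun z _ => ?_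
      rw [cpr_z p A Z C z astar c]
      have hne := (hposAC astar c).ne'
      field_simp
    have expand : ∀ z : ζ, pr p (fun ω => A ω = astar ∧ Z ω = z ∧ C ω = c) *
        ((1 : ℝ) / cpr p (fun ω' => A ω' = astar) (fun ω' => C ω' = c)
          * ((∑ a' : α, cex p Y (fun ω' => A ω' = a' ∧ Z ω' = z ∧ C ω' = c)
                * cpr p (fun ω' => A ω' = a') (fun ω' => C ω' = c))
             - ∑ a' : α, ∑ zb : ζ, cex p Y (fun ω' => A ω' = a' ∧ Z ω' = zb ∧ C ω' = c)
                 * cpr p (fun ω' => Z ω' = zb) (fun ω' => A ω' = astar ∧ C ω' = c)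
                 * cpr p (fun ω' => A ω' = a') (fun ω' => C ω' = c)))
        = (1 / cpr p (fun ω' => A ω' = astar) (fun ω' => C ω' = c)) *
            (pr p (fun ω => A ω = astar ∧ Z ω = z ∧ C ω = c) *
              (∑ a' : α, cex p Y (fun ω' => A ω' = a' ∧ Z ω' = z ∧ C ω' = c)
                * cpr p (fun ω' => A ω' = a') (fun ω' => C ω' = c)))
          - (1 / cpr p (fun ω' => A ω' = astar) (fun ω' => C ω' = c)) *
            (pr p (fun ω => A ω = astar ∧ Z ω = z ∧ C ω = c) *
              (∑ a' : α, ∑ zb : ζ, cex p Y (fun ω' => A ω' = a' ∧ Z ω' = zb ∧ C ω' = c)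
                * cpr p (fun ω' => Z ω' = zb) (fun ω' => A ω' = astar ∧ C ω' = c)
                * cpr p (fun ω' => A ω' = a') (fun ω' => C ω' = c))) := by
      intro z; ring
    rw [Finset.sum_congr rfl fun z _ => expand z, Finset.sum_sub_distrib,
      ← Finset.mul_sum, ← Finset.mul_sum, ← Finset.sum_mul,
      sum_pr_z p A Z C astar c, key]
    ring
  -- Term 3
  have H3 : (∑ ω, p ω *
      (∑ z : ζ, cex p Y (fun ω' => A ω' = A ω ∧ Z ω' = z ∧ C ω' = C ω)
        * cpr p (fun ω' => Z ω' = z) (fun ω' => A ω' = astar ∧ C ω' = C ω)))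
      = ∑ z : ζ, ∑ c : γ,
          cpr p (fun ω' => Z ω' = z) (fun ω' => A ω' = astar ∧ C ω' = c)
            * ∑ a : α, cex p Y (fun ω' => A ω' = a ∧ Z ω' = z ∧ C ω' = c)
                * cpr p (fun ω' => A ω' = a) (fun ω' => C ω' = c)
                * pr p (fun ω' => C ω' = c) := by
    rw [fiber_decomp A Z C]
    have step : ∀ (c : γ) (a : α) (z : ζ), (∑ ω, if A ω = a ∧ Z ω = z ∧ C ω = c then p ω *
        (∑ z' : ζ, cex p Y (fun ω' => A ω' = A ω ∧ Z ω' = z' ∧ C ω' = C ω)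
          * cpr p (fun ω' => Z ω' = z') (fun ω' => A ω' = astar ∧ C ω' = C ω)) else 0)
        = pr p (fun ω => A ω = a ∧ Z ω = z ∧ C ω = c) *
          (∑ z' : ζ, cex p Y (fun ω' => A ω' = a ∧ Z ω' = z' ∧ C ω' = c)
            * cpr p (fun ω' => Z ω' = z') (fun ω' => A ω' = astar ∧ C ω' = c)) := by
      intro c a z
      rw [← fiber_pull p A Z C a z c]
      refine Finset.sum_congr rfl fun ω _ => ?_
      by_cases h : A ω = a ∧ Z ω = z ∧ C ω = c
      · rw [if_pos h, if_pos h]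
        obtain ⟨h1, h2, h3⟩ := h
        rw [h1, h3]
      · rw [if_neg h, if_neg h]
    calc (∑ c, ∑ a, ∑ z, ∑ ω, if A ω = a ∧ Z ω = z ∧ C ω = c then p ω *
          (∑ z' : ζ, cex p Y (fun ω' => A ω' = A ω ∧ Z ω' = z' ∧ C ω' = C ω)
            * cpr p (fun ω' => Z ω' = z') (fun ω' => A ω' = astar ∧ C ω' = C ω)) else 0)
        = ∑ c, ∑ a, ∑ z, pr p (fun ω => A ω = a ∧ Z ω = z ∧ C ω = c) *
            (∑ z' : ζ, cex p Y (fun ω' => A ω' = a ∧ Z ω' = z' ∧ C ω' = c)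
              * cpr p (fun ω' => Z ω' = z') (fun ω' => A ω' = astar ∧ C ω' = c)) := by
          exact Finset.sum_congr rfl fun c _ => Finset.sum_congr rfl fun a _ =>
            Finset.sum_congr rfl fun z _ => step c a z
      _ = ∑ c, ∑ a, pr p (fun ω => A ω = a ∧ C ω = c) *
            (∑ z' : ζ, cex p Y (fun ω' => A ω' = a ∧ Z ω' = z' ∧ C ω' = c)
              * cpr p (fun ω' => Z ω' = z') (fun ω' => A ω' = astar ∧ C ω' = c)) := by
          refine Finset.sum_congr rfl fun c _ => Finset.sum_congr rfl fun a _ => ?_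
          rw [← Finset.sum_mul, sum_pr_z p A Z C a c]
      _ = ∑ c, ∑ a, ∑ z, pr p (fun ω => A ω = a ∧ C ω = c) *
            (cex p Y (fun ω' => A ω' = a ∧ Z ω' = z ∧ C ω' = c)
              * cpr p (fun ω' => Z ω' = z) (fun ω' => A ω' = astar ∧ C ω' = c)) := by
          refine Finset.sum_congr rfl fun c _ => Finset.sum_congr rfl fun a _ => ?_
          rw [Finset.mul_sum]
      _ = ∑ c, ∑ z, ∑ a, pr p (fun ω => A ω = a ∧ C ω = c) *
            (cex p Y (fun ω' => A ω' = a ∧ Z ω' = z ∧ C ω' = c)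
              * cpr p (fun ω' => Z ω' = z) (fun ω' => A ω' = astar ∧ C ω' = c)) := by
          exact Finset.sum_congr rfl fun c _ => Finset.sum_comm
      _ = ∑ z, ∑ c, ∑ a, pr p (fun ω => A ω = a ∧ C ω = c) *
            (cex p Y (fun ω' => A ω' = a ∧ Z ω' = z ∧ C ω' = c)
              * cpr p (fun ω' => Z ω' = z) (fun ω' => A ω' = astar ∧ C ω' = c)) :=
          Finset.sum_comm
      _ = _ := by
          refine Finset.sum_congr rfl fun z _ => Finset.sum_congr rfl fun c _ => ?_
          rw [Finset.mul_sum]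
          refine Finset.sum_congr rfl fun a _ => ?_
          rw [cpr_a p A C a c, mul_assoc, div_mul_cancel₀ _ (hqc c).ne']
          ring
  -- Assemble
  unfold ex
  have split : ∀ ω : Ω, p ω *
      ((Y ω - cex p Y (fun ω' => A ω' = A ω ∧ Z ω' = Z ω ∧ C ω' = C ω))
            * cpr p (fun ω' => Z ω' = Z ω) (fun ω' => A ω' = astar ∧ C ω' = C ω)
            / cpr p (fun ω' => Z ω' = Z ω) (fun ω' => A ω' = A ω ∧ C ω' = C ω)
        + (if A ω = astar then (1 : ℝ) else 0)
            / cpr p (fun ω' => A ω' = astar) (fun ω' => C ω' = C ω)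
            * ((∑ a : α,
                  cex p Y (fun ω' => A ω' = a ∧ Z ω' = Z ω ∧ C ω' = C ω)
                    * cpr p (fun ω' => A ω' = a) (fun ω' => C ω' = C ω))
               - ∑ a : α, ∑ zb : ζ,
                   cex p Y (fun ω' => A ω' = a ∧ Z ω' = zb ∧ C ω' = C ω)
                     * cpr p (fun ω' => Z ω' = zb) (fun ω' => A ω' = A ω ∧ C ω' = C ω)
                     * cpr p (fun ω' => A ω' = a) (fun ω' => C ω' = C ω))
        + (∑ z : ζ,
            cex p Y (fun ω' => A ω' = A ω ∧ Z ω' = z ∧ C ω' = C ω)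
              * cpr p (fun ω' => Z ω' = z) (fun ω' => A ω' = astar ∧ C ω' = C ω))
        - ∑ z : ζ, ∑ c : γ,
            cpr p (fun ω' => Z ω' = z) (fun ω' => A ω' = astar ∧ C ω' = c)
              * ∑ a : α,
                  cex p Y (fun ω' => A ω' = a ∧ Z ω' = z ∧ C ω' = c)
                    * cpr p (fun ω' => A ω' = a) (fun ω' => C ω' = c)
                    * pr p (fun ω' => C ω' = c))
      = p ω *
        ((Y ω - cex p Y (fun ω' => A ω' = A ω ∧ Z ω' = Z ω ∧ C ω' = C ω))
            * cpr p (fun ω' => Z ω' = Z ω) (fun ω' => A ω' = astar ∧ C ω' = C ω)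
            / cpr p (fun ω' => Z ω' = Z ω) (fun ω' => A ω' = A ω ∧ C ω' = C ω))
      + p ω *
        ((if A ω = astar then (1 : ℝ) else 0)
            / cpr p (fun ω' => A ω' = astar) (fun ω' => C ω' = C ω)
            * ((∑ a : α,
                  cex p Y (fun ω' => A ω' = a ∧ Z ω' = Z ω ∧ C ω' = C ω)
                    * cpr p (fun ω' => A ω' = a) (fun ω' => C ω' = C ω))
               - ∑ a : α, ∑ zb : ζ,
                   cex p Y (fun ω' => A ω' = a ∧ Z ω' = zb ∧ C ω' = C ω)
                     * cpr p (fun ω' => Z ω' = zb) (fun ω' => A ω' = A ω ∧ C ω' = C ω)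
                     * cpr p (fun ω' => A ω' = a) (fun ω' => C ω' = C ω)))
      + p ω *
        (∑ z : ζ,
            cex p Y (fun ω' => A ω' = A ω ∧ Z ω' = z ∧ C ω' = C ω)
              * cpr p (fun ω' => Z ω' = z) (fun ω' => A ω' = astar ∧ C ω' = C ω))
      - p ω *
        (∑ z : ζ, ∑ c : γ,
            cpr p (fun ω' => Z ω' = z) (fun ω' => A ω' = astar ∧ C ω' = c)
              * ∑ a : α,
                  cex p Y (fun ω' => A ω' = a ∧ Z ω' = z ∧ C ω' = c)
                    * cpr p (fun ω' => A ω' = a) (fun ω' => C ω' = c)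
                    * pr p (fun ω' => C ω' = c)) := by
    intro ω; ring
  rw [Finset.sum_congr rfl fun ω _ => split ω, Finset.sum_sub_distrib,
    Finset.sum_add_distrib, Finset.sum_add_distrib, H1, H2, H3,
    ← Finset.sum_mul, hp1, one_mul]
  ring
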